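/- Let L be a first-order language, let n ≥ 1, and let A ⊆ B ⊆ C be a chain of substructures of an L-structure. Suppose that A is a Σ_{n−1}-elementary substructure of B, that B is a Σ_{n−1}-elementary substructure of C, and that A is a fully elementary substructure of C. Then A is a Σ_n-elementary substructure of B. -/

import Mathlib

open FirstOrder FirstOrder.Language

universe u v w

mutual
  /-- `IsSigmaFml k φ` : `φ` is a `Σ_k` formula, i.e. a prenex formula consisting of at
  most `k` alternating blocks of quantifiers (possibly empty) beginning with an
  existential block, followed by a quantifier-free matrix. -/
  inductive IsSigmaFml {L : FirstOrder.Language.{u, v}} {α : Type w} :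
      ℕ → ∀ {n : ℕ}, L.BoundedFormula α n → Prop
    | of_isQF {k n : ℕ} {φ : L.BoundedFormula α n} (h : φ.IsQF) : IsSigmaFml k φ
    | of_isPi {k n : ℕ} {φ : L.BoundedFormula α n} (h : IsPiFml k φ) : IsSigmaFml (k + 1) φ
    | ex {k n : ℕ} {φ : L.BoundedFormula α (n + 1)} (h : IsSigmaFml (k + 1) φ) :
        IsSigmaFml (k + 1) φ.ex

  /-- `IsPiFml k φ` : `φ` is a `Π_k` formula, i.e. a prenex formula consisting of at
  most `k` alternating blocks of quantifiers (possibly empty) beginning with a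
  universal block, followed by a quantifier-free matrix. -/
  inductive IsPiFml {L : FirstOrder.Language.{u, v}} {α : Type w} :
      ℕ → ∀ {n : ℕ}, L.BoundedFormula α n → Prop
    | of_isQF {k n : ℕ} {φ : L.BoundedFormula α n} (h : φ.IsQF) : IsPiFml k φ
    | of_isSigma {k n : ℕ} {φ : L.BoundedFormula α n} (h : IsSigmaFml k φ) : IsPiFml (k + 1) φ
    | all {k n : ℕ} {φ : L.BoundedFormula α (n + 1)} (h : IsPiFml (k + 1) φ) :
        IsPiFml (k + 1) φ.all
end

/-- `A` is a `Σ_k`-elementary substructure of `B` (both substructures of the ambient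
`L`-structure `M`, with `A ≤ B`): every `Σ_k` formula with parameters from `A` holds
in `A` if and only if it holds in `B`. -/
def IsSigmaElementary {L : FirstOrder.Language.{u, v}} {M : Type w} [L.Structure M]
    (k : ℕ) (A B : L.Substructure M) (hAB : A ≤ B) : Prop :=
  ∀ {m : ℕ} (φ : L.Formula (Fin m)), IsSigmaFml k φ → ∀ v : Fin m → A,
    (φ.Realize v ↔ φ.Realize fun i => (⟨(v i : M), hAB (v i).2⟩ : B))

/-- `A` is a fully elementary substructure of `B`: every first-order formula with
parameters from `A` holds in `A` if and only if it holds in `B`. -/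
def IsFullyElementary {L : FirstOrder.Language.{u, v}} {M : Type w} [L.Structure M]
    (A B : L.Substructure M) (hAB : A ≤ B) : Prop :=
  ∀ {m : ℕ} (φ : L.Formula (Fin m)), ∀ v : Fin m → A,
    (φ.Realize v ↔ φ.Realize fun i => (⟨(v i : M), hAB (v i).2⟩ : B))

/-!
Along an inclusion `A ⊆ B` that is `Σ_k`-elementary, `Σ_{k+1}` formulas persist upwards:
`Π_k` formulas transfer because their negations are `Σ_k`, and a witness in `A` of an
existential quantifier is still a witness in `B`. Hence a `Σ_{k+1}` formula true in `A` is
true in `B`; conversely, one true in `B` persists to `C`, and full elementarity of `A ≺ C`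
brings it back down to `A`.
-/

universe x

open BoundedFormula Substructure

variable {L : FirstOrder.Language.{u, v}} {α β : Type*}

mutual

theorem IsSigmaFml.relabel {m : ℕ} (g : α → β ⊕ Fin m) {k n : ℕ} {φ : L.BoundedFormula α n} :
    IsSigmaFml k φ → IsSigmaFml k (φ.relabel g)
  | .of_isQF h => .of_isQF (h.relabel g)
  | .of_isPi h => .of_isPi (IsPiFml.relabel g h)
  | .ex h => by rw [relabel_ex]; exact .ex (IsSigmaFml.relabel g h)

theorem IsPiFml.relabel {m : ℕ} (g : α → β ⊕ Fin m) {k n : ℕ} {φ : L.BoundedFormula α n} :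
    IsPiFml k φ → IsPiFml k (φ.relabel g)
  | .of_isQF h => .of_isQF (h.relabel g)
  | .of_isSigma h => .of_isSigma (IsSigmaFml.relabel g h)
  | .all h => by rw [relabel_all]; exact .all (IsPiFml.relabel g h)

end

namespace FirstOrder.Language.BoundedFormula

theorem IsQF.toFormula {n : ℕ} {φ : L.BoundedFormula α n} (h : φ.IsQF) :
    φ.toFormula.IsQF := by
  induction h with
  | falsum => exact isQF_bot
  | of_isAtomic h =>
    cases h with
    | equal => exact (IsAtomic.equal _ _).isQF
    | rel => exact (IsAtomic.rel _ _).isQF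
  | imp _ _ ih₁ ih₂ => exact ih₁.imp ih₂

theorem toFormula_ex {n : ℕ} (φ : L.BoundedFormula α (n + 1)) :
    φ.ex.toFormula = (relabel (Sum.elim (Sum.inl ∘ Sum.inl) (Sum.map Sum.inr id ∘
      finSumFinEquiv.symm)) φ.toFormula).ex := by
  rfl

theorem realize_toFormula_relabel_finSumFinEquiv {N : Type*} [L.Structure N]
    {m l : ℕ} (φ : L.BoundedFormula (Fin m) l) (v : Fin m → N) (xs : Fin l → N) :
    (φ.toFormula.relabel finSumFinEquiv).Realize (Sum.elim v xs ∘ finSumFinEquiv.symm) ↔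
      φ.Realize v xs := by
  simp [Formula.realize_relabel, Function.comp_assoc]

end FirstOrder.Language.BoundedFormula

mutual

theorem IsSigmaFml.toFormula {k n : ℕ} {φ : L.BoundedFormula α n} :
    IsSigmaFml k φ → IsSigmaFml k φ.toFormula
  | .of_isQF h => .of_isQF h.toFormula
  | .of_isPi h => .of_isPi (IsPiFml.toFormula h)
  | .ex h => by rw [toFormula_ex]; exact .ex ((IsSigmaFml.toFormula h).relabel _)

theorem IsPiFml.toFormula {k n : ℕ} {φ : L.BoundedFormula α n} :
    IsPiFml k φ → IsPiFml k φ.toFormula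
  | .of_isQF h => .of_isQF h.toFormula
  | .of_isSigma h => .of_isSigma (IsSigmaFml.toFormula h)
  | .all h => .all ((IsPiFml.toFormula h).relabel _)

end

mutual

theorem IsSigmaFml.exists_isPiFml_realize_iff_not {k n : ℕ} {φ : L.BoundedFormula α n} :
    IsSigmaFml k φ → ∃ ψ : L.BoundedFormula α n, IsPiFml k ψ ∧
      ∀ {N : Type x} [L.Structure N] (v : α → N) (xs : Fin n → N),
        ψ.Realize v xs ↔ ¬ φ.Realize v xs
  | .of_isQF h => ⟨φ.not, .of_isQF h.not, fun _ _ => realize_not⟩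
  | .of_isPi h =>
    have ⟨ψ, hψ, hr⟩ := IsPiFml.exists_isSigmaFml_realize_iff_not h
    ⟨ψ, .of_isSigma hψ, hr⟩
  | .ex h =>
    have ⟨ψ, hψ, hr⟩ := IsSigmaFml.exists_isPiFml_realize_iff_not h
    ⟨ψ.all, .all hψ, fun v xs => by simp only [realize_all, realize_ex, hr, not_exists]⟩

theorem IsPiFml.exists_isSigmaFml_realize_iff_not {k n : ℕ} {φ : L.BoundedFormula α n} :
    IsPiFml k φ → ∃ ψ : L.BoundedFormula α n, IsSigmaFml k ψ ∧
      ∀ {N : Type x} [L.Structure N] (v : α → N) (xs : Fin n → N),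
        ψ.Realize v xs ↔ ¬ φ.Realize v xs
  | .of_isQF h => ⟨φ.not, .of_isQF h.not, fun _ _ => realize_not⟩
  | .of_isSigma h =>
    have ⟨ψ, hψ, hr⟩ := IsSigmaFml.exists_isPiFml_realize_iff_not h
    ⟨ψ, .of_isPi hψ, hr⟩
  | .all h =>
    have ⟨ψ, hψ, hr⟩ := IsPiFml.exists_isSigmaFml_realize_iff_not h
    ⟨ψ.ex, .ex hψ, fun v xs => by simp only [realize_all, realize_ex, hr, not_forall]⟩

end

namespace IsSigmaElementary

variable {M : Type w} [L.Structure M] {A B : L.Substructure M} {hAB : A ≤ B} {k m : ℕ}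

theorem realize_boundedFormula_iff (h : IsSigmaElementary k A B hAB)
    {l : ℕ} {φ : L.BoundedFormula (Fin m) l} (hφ : IsSigmaFml k φ)
    (v : Fin m → A) (xs : Fin l → A) :
    φ.Realize v xs ↔ φ.Realize (inclusion hAB ∘ v) (inclusion hAB ∘ xs) := by
  -- `IsSigmaElementary` only speaks about formulas: turn the bound variables into free ones.
  have key := h (φ.toFormula.relabel finSumFinEquiv) (hφ.toFormula.relabel _)
    (Sum.elim v xs ∘ finSumFinEquiv.symm)
  change _ ↔ Formula.Realize _ (inclusion hAB ∘ _) at key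
  rwa [← Function.comp_assoc, Sum.comp_elim, realize_toFormula_relabel_finSumFinEquiv,
    realize_toFormula_relabel_finSumFinEquiv] at key

theorem realize_boundedFormula_iff_of_isPiFml (h : IsSigmaElementary k A B hAB)
    {l : ℕ} {φ : L.BoundedFormula (Fin m) l} (hφ : IsPiFml k φ)
    (v : Fin m → A) (xs : Fin l → A) :
    φ.Realize v xs ↔ φ.Realize (inclusion hAB ∘ v) (inclusion hAB ∘ xs) := by
  obtain ⟨ψ, hψ, hψφ⟩ := hφ.exists_isSigmaFml_realize_iff_not
  rw [← not_iff_not, ← hψφ, ← hψφ]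
  exact h.realize_boundedFormula_iff hψ v xs

theorem realize_boundedFormula_of_isSigmaFml_succ (h : IsSigmaElementary k A B hAB)
    {l : ℕ} {φ : L.BoundedFormula (Fin m) l} (hφ : IsSigmaFml (k + 1) φ)
    (v : Fin m → A) (xs : Fin l → A) :
    φ.Realize v xs → φ.Realize (inclusion hAB ∘ v) (inclusion hAB ∘ xs) :=
  match hφ with
  | .of_isQF hq => (h.realize_boundedFormula_iff (.of_isQF hq) v xs).1
  | .of_isPi hπ => (h.realize_boundedFormula_iff_of_isPiFml hπ v xs).1
  | .ex hψ => fun hr => by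
    obtain ⟨a, ha⟩ := realize_ex.1 hr
    refine realize_ex.2 ⟨inclusion hAB a, ?_⟩
    simpa only [Fin.comp_snoc] using h.realize_boundedFormula_of_isSigmaFml_succ hψ v _ ha

theorem realize_formula_of_isSigmaFml_succ (h : IsSigmaElementary k A B hAB)
    {φ : L.Formula (Fin m)} (hφ : IsSigmaFml (k + 1) φ) (v : Fin m → A) :
    φ.Realize v → φ.Realize (inclusion hAB ∘ v) := by
  simpa only [Formula.Realize, Subsingleton.elim (inclusion hAB ∘ default) default] using
    h.realize_boundedFormula_of_isSigmaFml_succ hφ v default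

end IsSigmaElementary

/-- The three-model lemma at the core of the paper's main absoluteness theorem:
if `A ⊆ B ⊆ C` is a chain of substructures with `A ≺_{n-1} B`, `B ≺_{n-1} C` and
`A ≺ C` fully elementary, then `A ≺_n B`. -/
theorem isSigmaElementary_of_chain {L : FirstOrder.Language.{u, v}} {M : Type w}
    [L.Structure M] (n : ℕ) (hn : 1 ≤ n) (A B C : L.Substructure M)
    (hAB : A ≤ B) (hBC : B ≤ C)
    (h₁ : IsSigmaElementary (n - 1) A B hAB)
    (h₂ : IsSigmaElementary (n - 1) B C hBC)
    (h₃ : IsFullyElementary A C (hAB.trans hBC)) :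
    IsSigmaElementary n A B hAB := by
  obtain ⟨k, rfl⟩ := Nat.exists_eq_add_of_le' hn
  intro m φ hφ v
  exact ⟨h₁.realize_formula_of_isSigmaFml_succ hφ v,
    fun hB => (h₃ φ v).2 (h₂.realize_formula_of_isSigmaFml_succ hφ (inclusion hAB ∘ v) hB)⟩
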